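/- Let L be a number field, t a nonzero non-unit element of O_L, P a prime ideal of O_L with v_P(t) ≥ 1, and k a prime not dividing v_P(t). Then t is not a k-th power in the ring of integers of L(e^{2πi/k}). -/

import Mathlib

/-!
If `t = x ^ k` in `𝓞 M`, pick a prime `Q` of `𝓞 M` over `P`, with ramification index `e`.
Counting `Q` in the factorisation of `t 𝓞 M` gives `e * v_P(t) = k * v_Q(x)`. Since
`1 ≤ e ≤ [M : L] ≤ φ(k) < k` and `k` is prime, `k` must divide `v_P(t)`.
-/

open NumberField UniqueFactorizationMonoid

open Polynomial in
theorem IsCyclotomicExtension.finrank_le_totient (n : ℕ) [NeZero n] (K L : Type*) [Field K]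
    [Field L] [Algebra K L] [IsCyclotomicExtension {n} K L] :
    Module.finrank K L ≤ n.totient := by
  have hζ := zeta_spec n K L
  rw [(hζ.powerBasis K).finrank, hζ.powerBasis_dim K, ← natDegree_cyclotomic n K]
  refine natDegree_le_of_dvd (minpoly.dvd K _ ?_) (cyclotomic_ne_zero n K)
  simpa [aeval_def, eval₂_eq_eval_map, IsRoot.def] using hζ.isRoot_cyclotomic (NeZero.pos n)

namespace Ideal

variable {R S : Type*} [CommRing R] [CommRing S] [Algebra R S]

theorem ramificationIdx_le_finrank_of_flat [IsDomain R] [Module.Finite R S] [Module.Flat R S]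
    (p : Ideal R) [p.IsPrime] [Fintype (p.primesOver S)] (q : Ideal S) [q.IsPrime]
    [q.LiesOver p] : q.ramificationIdx R ≤ Module.finrank R S := by
  rw [← sum_ramification_inertia_eq_finrank p S]
  calc q.ramificationIdx R ≤ q.ramificationIdx R * q.inertiaDeg R :=
        Nat.le_mul_of_pos_right _ (q.inertiaDeg_pos R)
    _ ≤ _ := Finset.single_le_sum (f := fun q : p.primesOver S ↦
          q.1.ramificationIdx R * q.1.inertiaDeg R) (fun _ _ ↦ Nat.zero_le _)
          (Finset.mem_univ ⟨q, ‹_›, ‹_›⟩)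

theorem count_normalizedFactors_map [IsDedekindDomain R] [IsDedekindDomain S]
    [FaithfulSMul R S] [DecidableEq (Ideal R)] [DecidableEq (Ideal S)] {p : Ideal R}
    [hp : p.IsPrime] (hp0 : p ≠ ⊥) (q : Ideal S) [q.IsPrime] [q.LiesOver p] {I : Ideal R} (hI : I ≠ ⊥) :
    (normalizedFactors (I.map (algebraMap R S))).count q =
      q.ramificationIdx R * (normalizedFactors I).count p := by
  have hq0 : q ≠ ⊥ := ne_bot_of_liesOver_of_ne_bot hp0 q
  have hpirr : Irreducible p := (prime_of_isPrime hp0 hp).irreducible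
  have hqirr : Irreducible q := (prime_of_isPrime hq0 ‹_›).irreducible
  have h := IsDedekindDomain.emultiplicity_map_eq_ramificationIdx'_mul hI hpirr hqirr hq0
  rw [emultiplicity_eq_count_normalizedFactors hqirr (map_ne_bot_of_ne_bot hI),
    emultiplicity_eq_count_normalizedFactors hpirr hI, normalize_eq, normalize_eq,
    ramificationIdx'_eq_ramificationIdx p q hp0] at h
  exact_mod_cast h

end Ideal

theorem not_kth_power_in_cyclotomic_integers_general
    (L : Type) [Field L] [NumberField L] [DecidableEq (Ideal (𝓞 L))]
    (t : 𝓞 L) (ht : t ≠ 0)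
    (P : Ideal (𝓞 L)) (hP : P.IsPrime) (hP0 : P ≠ ⊥)
    (k : ℕ) (hk : k.Prime)
    (hdvd : ¬ k ∣ Multiset.count P (normalizedFactors (Ideal.span {t})))
    (M : Type) [Field M] [Algebra L M] [IsCyclotomicExtension {k} L M]
    [NumberField M] :
    ¬ ∃ x : 𝓞 M, algebraMap (𝓞 L) (𝓞 M) t = x ^ k := by
  rintro ⟨x, hx⟩
  have := hP.isMaximal hP0
  have : NeZero k := ⟨hk.ne_zero⟩
  obtain ⟨Q, hQ, hQP⟩ := Ideal.exists_maximal_ideal_liesOver_of_isIntegral (S := 𝓞 M) P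
  set e := Q.ramificationIdx (𝓞 L)
  have he_pos : 0 < e := Q.ramificationIdx_pos (𝓞 L)
  have he_lt : e < k := by
    calc e ≤ Module.finrank (𝓞 L) (𝓞 M) := Ideal.ramificationIdx_le_finrank_of_flat P Q
      _ = Module.finrank L M := (IsFractionRing.finrank_eq (𝓞 L) L (𝓞 M) M).symm
      _ ≤ k.totient := IsCyclotomicExtension.finrank_le_totient k L M
      _ < k := Nat.totient_lt k hk.one_lt
  have hcount : k * (normalizedFactors (Ideal.span {x})).count Q =
      e * (normalizedFactors (Ideal.span {t})).count P := by
    rw [← Ideal.count_normalizedFactors_map hP0 Q (by simpa), Ideal.map_span, Set.image_singleton,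
      hx, ← Ideal.span_singleton_pow, normalizedFactors_pow, Multiset.count_nsmul]
  rcases hk.dvd_mul.mp (Dvd.intro _ hcount) with h | h
  · exact absurd (Nat.le_of_dvd he_pos h) (by omega)
  · exact hdvd h

theorem not_kth_power_in_cyclotomic_integers
    (L : Type) [Field L] [NumberField L] [DecidableEq (Ideal (𝓞 L))]
    (t : 𝓞 L) (ht : t ≠ 0) (htu : ¬ IsUnit t)
    (P : Ideal (𝓞 L)) (hP : P.IsPrime) (hP0 : P ≠ ⊥)
    (hv : 1 ≤ Multiset.count P (normalizedFactors (Ideal.span {t})))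
    (k : ℕ) (hk : k.Prime)
    (hdvd : ¬ k ∣ Multiset.count P (normalizedFactors (Ideal.span {t})))
    (M : Type) [Field M] [Algebra L M] [IsCyclotomicExtension {k} L M]
    [NumberField M] :
    ¬ ∃ x : 𝓞 M, algebraMap (𝓞 L) (𝓞 M) t = x ^ k :=
  not_kth_power_in_cyclotomic_integers_general L t ht P hP hP0 k hk hdvd M
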